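/- arXiv:2308.10986 — 4 statements merged into one kernel-verified Lean document; each statement's English description precedes it below -/
import Mathlib

section
/- Let X₁ and X₂ be types with distinguished subsets Y₁ ⊆ X₁, Y₂ ⊆ X₂, and let n be a natural number. The map sending a multiset m of size n on X₁ ⊕ X₂ to the pair (m₁, m₂), where m₁ is the multiset of elements a of X₁ with inl a counted in m (with multiplicity) and m₂ is the multiset of elements b of X₂ with inr b counted in m (with multiplicity), is a bijection from the n-th symmetric power Sym (X₁ ⊕ X₂) n onto the disjoint union over s = 0, …, n of the products Sym X₁ s × Sym X₂ (n − s). Moreover, m contains an element of inl '' Y₁ ∪ inr '' Y₂ if and only if m₁ contains an element of Y₁ or m₂ contains an element of Y₂. -/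
/-- The number of `inl`-elements plus the number of `inr`-elements of a multiset on a sum
type is its cardinality. -/
lemma card_filterMap_getLeft?_add_card_filterMap_getRight? {X₁ X₂ : Type*}
    (m : Multiset (X₁ ⊕ X₂)) :
    (m.filterMap Sum.getLeft?).card + (m.filterMap Sum.getRight?).card = m.card := by
  induction m using Multiset.induction_on with
  | empty => simp
  | cons x m ih =>
    cases x <;>
      simp [Multiset.filterMap_cons_some, Multiset.filterMap_cons_none, Multiset.filterMap_cons, ih] <;> omega

/-- The map sending a multiset `m` of size `n` on `X₁ ⊕ X₂` to the pair `(m₁, m₂)`,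
where `m₁` collects the elements of `X₁` occurring in `m` (with multiplicity) and
`m₂` collects the elements of `X₂` occurring in `m` (with multiplicity), regarded as
landing in the disjoint union over `s = 0, …, n` of `Sym X₁ s × Sym X₂ (n - s)`. -/
def symSumSplit {X₁ X₂ : Type*} {n : ℕ} (m : Sym (X₁ ⊕ X₂) n) :
    Σ s : Fin (n + 1), Sym X₁ (s : ℕ) × Sym X₂ (n - (s : ℕ)) :=
  ⟨⟨((m : Multiset (X₁ ⊕ X₂)).filterMap Sum.getLeft?).card, by
      have h := card_filterMap_getLeft?_add_card_filterMap_getRight? (m : Multiset (X₁ ⊕ X₂))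
      have hc : Multiset.card (m : Multiset (X₁ ⊕ X₂)) = n := m.2
      omega⟩,
    ⟨(m : Multiset (X₁ ⊕ X₂)).filterMap Sum.getLeft?, rfl⟩,
    ⟨(m : Multiset (X₁ ⊕ X₂)).filterMap Sum.getRight?, by
      have h := card_filterMap_getLeft?_add_card_filterMap_getRight? (m : Multiset (X₁ ⊕ X₂))
      have hc : Multiset.card (m : Multiset (X₁ ⊕ X₂)) = n := m.2
      simp only [Fin.val_mk]
      omega⟩⟩

lemma recon {X₁ X₂ : Type*} (m : Multiset (X₁ ⊕ X₂)) :
    (m.filterMap Sum.getLeft?).map Sum.inl + (m.filterMap Sum.getRight?).map Sum.inr = m := by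
  induction m using Multiset.induction_on with
  | empty => simp
  | cons x m ih =>
    cases x with
    | inl a =>
      rw [Multiset.filterMap_cons_some _ _ _ (by rfl), Multiset.filterMap_cons_none _ _ (by rfl),
        Multiset.map_cons, Multiset.cons_add, ih]
    | inr b =>
      rw [Multiset.filterMap_cons_none (f := Sum.getLeft?) _ _ (by rfl),
        Multiset.filterMap_cons_some (f := Sum.getRight?) _ _ (by rfl),
        Multiset.map_cons, Multiset.add_cons, ih]

lemma filterMap_add' {α β : Type*} (f : α → Option β) (s t : Multiset α) :
    (s + t).filterMap f = s.filterMap f + t.filterMap f := by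
  induction s using Multiset.induction_on with
  | empty => simp
  | cons a s ih =>
    rw [Multiset.cons_add]
    rcases h : f a with _ | b
    · rw [Multiset.filterMap_cons_none _ _ h, Multiset.filterMap_cons_none _ _ h, ih]
    · rw [Multiset.filterMap_cons_some _ _ _ h, Multiset.filterMap_cons_some _ _ _ h, ih,
        Multiset.cons_add]


lemma filterMap_const_none {α β : Type*} (m : Multiset α) :
    m.filterMap (fun _ => (none : Option β)) = 0 := by
  induction m using Multiset.induction_on with
  | empty => simp
  | cons a s ih => rw [Multiset.filterMap_cons_none _ _ rfl, ih]

lemma fL_sum {X₁ X₂ : Type*} (m₁ : Multiset X₁) (m₂ : Multiset X₂) :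
    ((m₁.map Sum.inl + m₂.map Sum.inr).filterMap Sum.getLeft?) = m₁ := by
  rw [filterMap_add', Multiset.filterMap_map, Multiset.filterMap_map]
  simp [Function.comp_def, Multiset.filterMap_eq_map, filterMap_const_none]

lemma fR_sum {X₁ X₂ : Type*} (m₁ : Multiset X₁) (m₂ : Multiset X₂) :
    ((m₁.map Sum.inl + m₂.map Sum.inr).filterMap Sum.getRight?) = m₂ := by
  rw [filterMap_add', Multiset.filterMap_map, Multiset.filterMap_map]
  simp [Function.comp_def, Multiset.filterMap_eq_map, filterMap_const_none]

lemma sig_ext {X₁ X₂ : Type*} {n : ℕ}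
    {t t' : Σ s : Fin (n + 1), Sym X₁ (s : ℕ) × Sym X₂ (n - (s : ℕ))}
    (h1 : (t.1 : ℕ) = t'.1) (h2 : (t.2.1 : Multiset X₁) = t'.2.1)
    (h3 : (t.2.2 : Multiset X₂) = t'.2.2) : t = t' := by
  obtain ⟨⟨a, ha⟩, ⟨p1, hp1⟩, ⟨p2, hp2⟩⟩ := t
  obtain ⟨⟨b, hb⟩, ⟨q1, hq1⟩, ⟨q2, hq2⟩⟩ := t'
  simp only at h1 h2 h3
  subst h1; subst h2; subst h3
  rfl


/-- the map `m ↦ (m₁, m₂)` is a bijection from `Sym (X₁ ⊕ X₂) n` onto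
`⨆ₛ Sym X₁ s × Sym X₂ (n - s)`; moreover `m` contains an element of
`inl '' Y₁ ∪ inr '' Y₂` iff `m₁` contains an element of `Y₁` or `m₂` contains an
element of `Y₂`. -/
theorem symSumSplit_bijective_and_mem_iff {X₁ X₂ : Type*} (Y₁ : Set X₁) (Y₂ : Set X₂) (n : ℕ) :
    Function.Bijective (symSumSplit (X₁ := X₁) (X₂ := X₂) (n := n)) ∧
    ∀ m : Sym (X₁ ⊕ X₂) n,
      ((∃ x ∈ (m : Multiset (X₁ ⊕ X₂)), x ∈ Sum.inl '' Y₁ ∪ Sum.inr '' Y₂) ↔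
        ((∃ a ∈ ((symSumSplit m).2.1 : Multiset X₁), a ∈ Y₁) ∨
         (∃ b ∈ ((symSumSplit m).2.2 : Multiset X₂), b ∈ Y₂))) := by
  constructor
  · constructor
    · intro m m' h
      have h2 := congrArg
        (fun t : Σ s : Fin (n + 1), Sym X₁ (s : ℕ) × Sym X₂ (n - (s : ℕ)) =>
          ((t.2.1 : Multiset X₁), (t.2.2 : Multiset X₂))) h
      simp only [symSumSplit, Sym.coe_mk, Prod.mk.injEq] at h2
      obtain ⟨hL, hR⟩ := h2
      have key : (m : Multiset (X₁ ⊕ X₂)) = (m' : Multiset (X₁ ⊕ X₂)) := by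
        rw [← recon (m : Multiset (X₁ ⊕ X₂)), ← recon (m' : Multiset (X₁ ⊕ X₂)), hL, hR]
      exact Subtype.ext key
    · rintro ⟨⟨s, hs⟩, ⟨p1, hp1⟩, ⟨p2, hp2⟩⟩
      refine ⟨⟨p1.map Sum.inl + p2.map Sum.inr, by simp [hp1, hp2]; omega⟩, ?_⟩
      apply sig_ext <;>
        simp [symSumSplit, fL_sum, fR_sum, hp1, -Multiset.filterMap_add]
  · intro m
    constructor
    · rintro ⟨x, hx, hxy⟩
      rcases hxy with ⟨a, ha, rfl⟩ | ⟨b, hb, rfl⟩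
      · exact Or.inl ⟨a, (Multiset.mem_filterMap _ _).mpr ⟨Sum.inl a, hx, rfl⟩, ha⟩
      · exact Or.inr ⟨b, (Multiset.mem_filterMap _ _).mpr ⟨Sum.inr b, hx, rfl⟩, hb⟩
    · rintro (⟨a, ha, hY⟩ | ⟨b, hb, hY⟩)
      · obtain ⟨x, hx, hfx⟩ := (Multiset.mem_filterMap _ _).mp ha
        rw [Sum.getLeft?_eq_some_iff] at hfx
        subst hfx
        exact ⟨Sum.inl a, hx, Or.inl ⟨a, hY, rfl⟩⟩
      · obtain ⟨x, hx, hfx⟩ := (Multiset.mem_filterMap _ _).mp hb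
        rw [Sum.getRight?_eq_some_iff] at hfx
        subst hfx
        exact ⟨Sum.inr b, hx, Or.inr ⟨b, hY, rfl⟩⟩
end

section
/- Let M be a type with a subset N ⊆ M, and for j = 1, 2 let A_j be a type with a weight function w_j : A_j → ℕ taking only positive values and a subset B_j ⊆ A_j. Let A be the set of pairs (α₁, α₂) ∈ (A₁ ∪ {∗}) × (A₂ ∪ {∗}) other than (∗, ∗), with weight w(α₁, α₂) = w₁(α₁) + w₂(α₂) (where w_j(∗) = 0), and let B ⊆ A consist of those (α₁, α₂) with α₁ ∈ B₁ or α₂ ∈ B₂. Then for every n, the set of pairs (K, φ), with K a finite subset of M and φ : K → A satisfying Σ_{x∈K} w(φ(x)) = n, is in bijection with the set of pairs of pairs ((K₁, φ₁), (K₂, φ₂)), with K_j finite subsets of M and φ_j : K_j → A_j satisfying Σ_{x∈K₁} w₁(φ₁(x)) + Σ_{x∈K₂} w₂(φ₂(x)) = n, via K = K₁ ∪ K₂ and φ(x) = (φ₁(x) or ∗, φ₂(x) or ∗). Moreover, under this bijection, [some x ∈ K lies in N or has φ(x) ∈ B] holds if and only if [some x ∈ K₁ lies in N or has φ₁(x)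 ∈ B₁] or [some x ∈ K₂ lies in N or has φ₂(x) ∈ B₂]. -/
/-- The total weight `∑_{x ∈ K} w(φ(x))` of a decorated configuration `(K, φ)` on `M`
with labels in `A` weighted by `w`. -/
def configWeight {M A : Type*} (w : A → ℕ) (p : Σ K : Finset M, ({x // x ∈ K} → A)) : ℕ :=
  ∑ x : {x // x ∈ p.1}, w (p.2 x)

/-- The degree-`n` decorated configuration space of `M` with weighted label type
`(A, w)`: pairs `(K, φ)` of a finite subset `K ⊆ M` and `φ : K → A` with
`∑_{x ∈ K} w(φ(x)) = n`. -/
def Config (M A : Type*) (w : A → ℕ) (n : ℕ) : Type _ :=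
  {p : Σ K : Finset M, ({x // x ∈ K} → A) // configWeight w p = n}

/-- A decorated configuration `(K, φ)` is distinguished (with respect to `N ⊆ M` and
`B ⊆ A`) if some `x ∈ K` lies in `N` or has `φ(x) ∈ B`. -/
def IsDistinguished {M A : Type*} (N : Set M) (B : Set A)
    (p : Σ K : Finset M, ({x // x ∈ K} → A)) : Prop :=
  ∃ x : {x // x ∈ p.1}, (x : M) ∈ N ∨ p.2 x ∈ B

set_option linter.unusedSectionVars false
section Aux
variable {M : Type*} [DecidableEq M]

lemma sum_dite_sub {A : Type*} {K L : Finset M} (hKL : K ⊆ L)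
    (φ : {x // x ∈ K} → A) (w : A → ℕ) :
    ∑ x : {x // x ∈ L}, ((if h : (x : M) ∈ K then some (φ ⟨x, h⟩) else none).elim 0 w)
      = ∑ x : {x // x ∈ K}, w (φ x) := by
  rw [Finset.univ_eq_attach, Finset.univ_eq_attach]
  have h1 : ∑ x ∈ L.attach,
      ((if h : (x : M) ∈ K then some (φ ⟨x, h⟩) else none).elim 0 w)
      = ∑ x ∈ L.attach, (fun y : M => if h : y ∈ K then w (φ ⟨y, h⟩) else 0) x.1 :=
    Finset.sum_congr rfl (by intro x _; by_cases h : (x : M) ∈ K <;> simp [h])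
  rw [h1, Finset.sum_attach L (fun y : M => if h : y ∈ K then w (φ ⟨y, h⟩) else 0),
    ← Finset.sum_subset hKL (by intro x _ hx; simp [hx]),
    ← Finset.sum_attach K (fun y : M => if h : y ∈ K then w (φ ⟨y, h⟩) else 0)]
  exact Finset.sum_congr rfl (fun x _ => by simp [x.2])

variable {A₁ A₂ : Type*}

def combineFun (pp : (Σ K₁ : Finset M, ({x // x ∈ K₁} → A₁)) ×
    (Σ K₂ : Finset M, ({x // x ∈ K₂} → A₂))) :
    Σ K : Finset M, ({x // x ∈ K} → {q : Option A₁ × Option A₂ // q ≠ (none, none)}) :=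
  ⟨pp.1.1 ∪ pp.2.1, fun x =>
    ⟨((if h : (x : M) ∈ pp.1.1 then some (pp.1.2 ⟨x, h⟩) else none),
      (if h : (x : M) ∈ pp.2.1 then some (pp.2.2 ⟨x, h⟩) else none)), by
      intro hc
      rcases Finset.mem_union.mp x.2 with h | h
      · have := congrArg Prod.fst hc
        simp [dif_pos h] at this
      · have := congrArg Prod.snd hc
        simp [dif_pos h] at this⟩⟩

lemma combine_weight (w₁ : A₁ → ℕ) (w₂ : A₂ → ℕ)
    (pp : (Σ K₁ : Finset M, ({x // x ∈ K₁} → A₁)) ×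
      (Σ K₂ : Finset M, ({x // x ∈ K₂} → A₂))) :
    configWeight (fun q : {q : Option A₁ × Option A₂ // q ≠ (none, none)} =>
      q.1.1.elim 0 w₁ + q.1.2.elim 0 w₂) (combineFun pp)
      = configWeight w₁ pp.1 + configWeight w₂ pp.2 := by
  unfold configWeight combineFun
  rw [Finset.sum_add_distrib]
  congr 1
  · exact sum_dite_sub Finset.subset_union_left _ _
  · exact sum_dite_sub Finset.subset_union_right _ _

lemma sigma_fun_eq {A : Type*} {p q : Σ K : Finset M, ({x // x ∈ K} → A)} (h : p = q) :
    ∀ x (hx : x ∈ p.1) (hx' : x ∈ q.1), p.2 ⟨x, hx⟩ = q.2 ⟨x, hx'⟩ := by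
  subst h; intro x hx hx'; rfl

lemma sigma_ext' {A : Type*} {K K' : Finset M} {φ : {x // x ∈ K} → A}
    {φ' : {x // x ∈ K'} → A} (h : K = K')
    (h2 : ∀ x (hx : x ∈ K) (hx' : x ∈ K'), φ ⟨x, hx⟩ = φ' ⟨x, hx'⟩) :
    (⟨K, φ⟩ : Σ K : Finset M, ({x // x ∈ K} → A)) = ⟨K', φ'⟩ := by
  subst h
  have : φ = φ' := funext fun x => h2 x.1 x.2 x.2
  rw [this]

end Aux

/-- with `A` the set of pairs `(α₁, α₂) ∈ (A₁ ∪ {∗}) × (A₂ ∪ {∗})` other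
than `(∗,∗)`, weighted by `w(α₁,α₂) = w₁(α₁) + w₂(α₂)` (where `w(∗) = 0`), the degree-`n`
decorated configurations on `M` with labels in `A` are in bijection with pairs of
decorated configurations `((K₁,φ₁), (K₂,φ₂))` with labels in `A₁` resp. `A₂` of total
weight `n`, via `K = K₁ ∪ K₂`, `φ(x) = (φ₁(x) or ∗, φ₂(x) or ∗)`; and the bijection
matches up the distinguished configurations on the two sides. -/
theorem config_mul_coefficients {M A₁ A₂ : Type*} [DecidableEq M] (N : Set M)
    (w₁ : A₁ → ℕ) (hw₁ : ∀ a, 0 < w₁ a) (B₁ : Set A₁)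
    (w₂ : A₂ → ℕ) (hw₂ : ∀ a, 0 < w₂ a) (B₂ : Set A₂) (n : ℕ) :
    ∃ g : {pp : (Σ K₁ : Finset M, ({x // x ∈ K₁} → A₁)) ×
              (Σ K₂ : Finset M, ({x // x ∈ K₂} → A₂)) //
            configWeight w₁ pp.1 + configWeight w₂ pp.2 = n} →
          Config M {q : Option A₁ × Option A₂ // q ≠ (none, none)}
            (fun q => q.1.1.elim 0 w₁ + q.1.2.elim 0 w₂) n,
      Function.Bijective g ∧
      (∀ pp, ((g pp).1.1 = pp.1.1.1 ∪ pp.1.2.1) ∧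
        ∀ x (hx : x ∈ (g pp).1.1),
          ((g pp).1.2 ⟨x, hx⟩).1 =
            ((if h : x ∈ pp.1.1.1 then some (pp.1.1.2 ⟨x, h⟩) else none),
             (if h : x ∈ pp.1.2.1 then some (pp.1.2.2 ⟨x, h⟩) else none))) ∧
      (∀ pp,
        IsDistinguished N
            {q : {q : Option A₁ × Option A₂ // q ≠ (none, none)} |
              (∃ a ∈ B₁, q.1.1 = some a) ∨ (∃ a ∈ B₂, q.1.2 = some a)}
            (g pp).1 ↔
          IsDistinguished N B₁ pp.1.1 ∨ IsDistinguished N B₂ pp.1.2) := by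
  classical
  refine ⟨fun pp => ⟨combineFun pp.1, by rw [combine_weight]; exact pp.2⟩, ⟨?_, ?_⟩, ?_, ?_⟩
  · -- injective
    intro pp qq h
    have h1 : combineFun pp.1 = combineFun qq.1 := congrArg Subtype.val h
    have hK : pp.1.1.1 ∪ pp.1.2.1 = qq.1.1.1 ∪ qq.1.2.1 := congrArg Sigma.fst h1
    have hφ := sigma_fun_eq h1
    -- membership characterizations
    have hmem₁ : ∀ x, x ∈ pp.1.1.1 ↔ x ∈ qq.1.1.1 := by
      intro x
      constructor
      · intro hx
        have hxu : x ∈ pp.1.1.1 ∪ pp.1.2.1 := Finset.mem_union_left _ hx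
        have hxu' : x ∈ qq.1.1.1 ∪ qq.1.2.1 := hK ▸ hxu
        have hcomp : (if h : x ∈ pp.1.1.1 then some (pp.1.1.2 ⟨x, h⟩) else none)
            = (if h : x ∈ qq.1.1.1 then some (qq.1.1.2 ⟨x, h⟩) else none) :=
          congrArg (fun q => q.1.1) (hφ x hxu hxu')
        by_contra h2
        rw [dif_pos hx, dif_neg h2] at hcomp
        exact Option.some_ne_none _ hcomp
      · intro hx
        have hxu' : x ∈ qq.1.1.1 ∪ qq.1.2.1 := Finset.mem_union_left _ hx
        have hxu : x ∈ pp.1.1.1 ∪ pp.1.2.1 := hK ▸ hxu'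
        have hcomp : (if h : x ∈ pp.1.1.1 then some (pp.1.1.2 ⟨x, h⟩) else none)
            = (if h : x ∈ qq.1.1.1 then some (qq.1.1.2 ⟨x, h⟩) else none) :=
          congrArg (fun q => q.1.1) (hφ x hxu hxu')
        by_contra h2
        rw [dif_neg h2, dif_pos hx] at hcomp
        exact Option.some_ne_none _ hcomp.symm
    have hmem₂ : ∀ x, x ∈ pp.1.2.1 ↔ x ∈ qq.1.2.1 := by
      intro x
      constructor
      · intro hx
        have hxu : x ∈ pp.1.1.1 ∪ pp.1.2.1 := Finset.mem_union_right _ hx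
        have hxu' : x ∈ qq.1.1.1 ∪ qq.1.2.1 := hK ▸ hxu
        have hcomp : (if h : x ∈ pp.1.2.1 then some (pp.1.2.2 ⟨x, h⟩) else none)
            = (if h : x ∈ qq.1.2.1 then some (qq.1.2.2 ⟨x, h⟩) else none) :=
          congrArg (fun q => q.1.2) (hφ x hxu hxu')
        by_contra h2
        rw [dif_pos hx, dif_neg h2] at hcomp
        exact Option.some_ne_none _ hcomp
      · intro hx
        have hxu' : x ∈ qq.1.1.1 ∪ qq.1.2.1 := Finset.mem_union_right _ hx
        have hxu : x ∈ pp.1.1.1 ∪ pp.1.2.1 := hK ▸ hxu'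
        have hcomp : (if h : x ∈ pp.1.2.1 then some (pp.1.2.2 ⟨x, h⟩) else none)
            = (if h : x ∈ qq.1.2.1 then some (qq.1.2.2 ⟨x, h⟩) else none) :=
          congrArg (fun q => q.1.2) (hφ x hxu hxu')
        by_contra h2
        rw [dif_neg h2, dif_pos hx] at hcomp
        exact Option.some_ne_none _ hcomp.symm
    have hK₁ : pp.1.1.1 = qq.1.1.1 := Finset.ext hmem₁
    have hK₂ : pp.1.2.1 = qq.1.2.1 := Finset.ext hmem₂
    have e1 : pp.1.1 = qq.1.1 := by
      refine sigma_ext' hK₁ ?_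
      intro x hx hx'
      have hxu : x ∈ pp.1.1.1 ∪ pp.1.2.1 := Finset.mem_union_left _ hx
      have hxu' : x ∈ qq.1.1.1 ∪ qq.1.2.1 := hK ▸ hxu
      have hcomp : (if h : x ∈ pp.1.1.1 then some (pp.1.1.2 ⟨x, h⟩) else none)
          = (if h : x ∈ qq.1.1.1 then some (qq.1.1.2 ⟨x, h⟩) else none) :=
        congrArg (fun q => q.1.1) (hφ x hxu hxu')
      rw [dif_pos hx, dif_pos hx'] at hcomp
      exact Option.some.inj hcomp
    have e2 : pp.1.2 = qq.1.2 := by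
      refine sigma_ext' hK₂ ?_
      intro x hx hx'
      have hxu : x ∈ pp.1.1.1 ∪ pp.1.2.1 := Finset.mem_union_right _ hx
      have hxu' : x ∈ qq.1.1.1 ∪ qq.1.2.1 := hK ▸ hxu
      have hcomp : (if h : x ∈ pp.1.2.1 then some (pp.1.2.2 ⟨x, h⟩) else none)
          = (if h : x ∈ qq.1.2.1 then some (qq.1.2.2 ⟨x, h⟩) else none) :=
        congrArg (fun q => q.1.2) (hφ x hxu hxu')
      rw [dif_pos hx, dif_pos hx'] at hcomp
      exact Option.some.inj hcomp
    exact Subtype.ext (Prod.ext_iff.mpr ⟨e1, e2⟩)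
  · -- surjective
    rintro ⟨⟨K, φ⟩, hw⟩
    set K₁ : Finset M := (K.attach.filter (fun x => ((φ x).1.1).isSome)).image Subtype.val
      with hK₁def
    set K₂ : Finset M := (K.attach.filter (fun x => ((φ x).1.2).isSome)).image Subtype.val
      with hK₂def
    have mem₁ : ∀ y, y ∈ K₁ ↔ ∃ hy : y ∈ K, ((φ ⟨y, hy⟩).1.1).isSome := by
      intro y
      constructor
      · intro h
        obtain ⟨a, ha, rfl⟩ := Finset.mem_image.mp h
        obtain ⟨-, hs⟩ := Finset.mem_filter.mp ha
        exact ⟨a.2, hs⟩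
      · rintro ⟨hy, hs⟩
        exact Finset.mem_image.mpr ⟨⟨y, hy⟩,
          Finset.mem_filter.mpr ⟨Finset.mem_attach _ _, hs⟩, rfl⟩
    have mem₂ : ∀ y, y ∈ K₂ ↔ ∃ hy : y ∈ K, ((φ ⟨y, hy⟩).1.2).isSome := by
      intro y
      constructor
      · intro h
        obtain ⟨a, ha, rfl⟩ := Finset.mem_image.mp h
        obtain ⟨-, hs⟩ := Finset.mem_filter.mp ha
        exact ⟨a.2, hs⟩
      · rintro ⟨hy, hs⟩
        exact Finset.mem_image.mpr ⟨⟨y, hy⟩,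
          Finset.mem_filter.mpr ⟨Finset.mem_attach _ _, hs⟩, rfl⟩
    let φ₁ : {y // y ∈ K₁} → A₁ := fun y =>
      ((φ ⟨y.1, ((mem₁ y.1).mp y.2).choose⟩).1.1).get ((mem₁ y.1).mp y.2).choose_spec
    let φ₂ : {y // y ∈ K₂} → A₂ := fun y =>
      ((φ ⟨y.1, ((mem₂ y.1).mp y.2).choose⟩).1.2).get ((mem₂ y.1).mp y.2).choose_spec
    have hK : K₁ ∪ K₂ = K := by
      apply Finset.ext
      intro y
      rw [Finset.mem_union, mem₁, mem₂]
      constructor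
      · rintro (⟨hy, -⟩ | ⟨hy, -⟩) <;> exact hy
      · intro hy
        by_cases h1 : ((φ ⟨y, hy⟩).1.1).isSome
        · exact Or.inl ⟨hy, h1⟩
        · refine Or.inr ⟨hy, ?_⟩
          by_contra h2
          exact (φ ⟨y, hy⟩).2 (Prod.ext_iff.mpr
            ⟨Option.not_isSome_iff_eq_none.mp h1, Option.not_isSome_iff_eq_none.mp h2⟩)
    have hφ : ∀ y (hy₁ : y ∈ K₁ ∪ K₂) (hy : y ∈ K),
        (combineFun (⟨⟨K₁, φ₁⟩, ⟨K₂, φ₂⟩⟩ :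
          (Σ K₁ : Finset M, ({x // x ∈ K₁} → A₁)) ×
          (Σ K₂ : Finset M, ({x // x ∈ K₂} → A₂)))).2 ⟨y, hy₁⟩ = φ ⟨y, hy⟩ := by
      intro y hy₁ hy
      apply Subtype.ext
      have h1 : (if h : y ∈ K₁ then some (φ₁ ⟨y, h⟩) else none) = (φ ⟨y, hy⟩).1.1 := by
        by_cases h : y ∈ K₁
        · rw [dif_pos h]
          exact Option.some_get _
        · rw [dif_neg h]
          have hns : ¬ ((φ ⟨y, hy⟩).1.1).isSome := fun hs => h ((mem₁ y).mpr ⟨hy, hs⟩)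
          exact (Option.not_isSome_iff_eq_none.mp hns).symm
      have h2 : (if h : y ∈ K₂ then some (φ₂ ⟨y, h⟩) else none) = (φ ⟨y, hy⟩).1.2 := by
        by_cases h : y ∈ K₂
        · rw [dif_pos h]
          exact Option.some_get _
        · rw [dif_neg h]
          have hns : ¬ ((φ ⟨y, hy⟩).1.2).isSome := fun hs => h ((mem₂ y).mpr ⟨hy, hs⟩)
          exact (Option.not_isSome_iff_eq_none.mp hns).symm
      exact Prod.ext_iff.mpr ⟨h1, h2⟩
    have hsig : combineFun (⟨⟨K₁, φ₁⟩, ⟨K₂, φ₂⟩⟩ :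
        (Σ K₁ : Finset M, ({x // x ∈ K₁} → A₁)) ×
        (Σ K₂ : Finset M, ({x // x ∈ K₂} → A₂))) = ⟨K, φ⟩ :=
      sigma_ext' hK hφ
    have hsum : configWeight w₁ (⟨K₁, φ₁⟩ : Σ K : Finset M, ({x // x ∈ K} → A₁))
        + configWeight w₂ (⟨K₂, φ₂⟩ : Σ K : Finset M, ({x // x ∈ K} → A₂)) = n := by
      rw [← combine_weight w₁ w₂ (⟨⟨K₁, φ₁⟩, ⟨K₂, φ₂⟩⟩ : (Σ K₁ : Finset M, ({x // x ∈ K₁} → A₁)) × (Σ K₂ : Finset M, ({x // x ∈ K₂} → A₂))), hsig]; exact hw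
    exact ⟨⟨⟨⟨K₁, φ₁⟩, ⟨K₂, φ₂⟩⟩, hsum⟩, Subtype.ext hsig⟩
  · -- union and component formulas
    exact fun pp => ⟨rfl, fun x hx => rfl⟩
  · -- distinguished iff
    intro pp
    constructor
    · rintro ⟨⟨x, hx⟩, hd⟩
      rcases hd with hN | hB
      · rcases Finset.mem_union.mp hx with h | h
        · exact Or.inl ⟨⟨x, h⟩, Or.inl hN⟩
        · exact Or.inr ⟨⟨x, h⟩, Or.inl hN⟩
      · rcases hB with ⟨a, haB, ha⟩ | ⟨a, haB, ha⟩
        · have ha' : (if h : x ∈ pp.1.1.1 then some (pp.1.1.2 ⟨x, h⟩) else none) = some a := ha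
          by_cases h : x ∈ pp.1.1.1
          · rw [dif_pos h] at ha'
            exact Or.inl ⟨⟨x, h⟩, Or.inr (Option.some.inj ha' ▸ haB)⟩
          · rw [dif_neg h] at ha'
            exact absurd ha' (by simp)
        · have ha' : (if h : x ∈ pp.1.2.1 then some (pp.1.2.2 ⟨x, h⟩) else none) = some a := ha
          by_cases h : x ∈ pp.1.2.1
          · rw [dif_pos h] at ha'
            exact Or.inr ⟨⟨x, h⟩, Or.inr (Option.some.inj ha' ▸ haB)⟩
          · rw [dif_neg h] at ha'
            exact absurd ha' (by simp)
    · rintro (⟨⟨x, hx⟩, hd⟩ | ⟨⟨x, hx⟩, hd⟩)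
      · refine ⟨⟨x, Finset.mem_union_left _ hx⟩, ?_⟩
        rcases hd with hN | hB
        · exact Or.inl hN
        · refine Or.inr (Or.inl ⟨pp.1.1.2 ⟨x, hx⟩, hB, ?_⟩)
          show (if h : x ∈ pp.1.1.1 then some (pp.1.1.2 ⟨x, h⟩) else none) = _
          rw [dif_pos hx]
      · refine ⟨⟨x, Finset.mem_union_right _ hx⟩, ?_⟩
        rcases hd with hN | hB
        · exact Or.inl hN
        · refine Or.inr (Or.inr ⟨pp.1.2.2 ⟨x, hx⟩, hB, ?_⟩)
          show (if h : x ∈ pp.1.2.1 then some (pp.1.2.2 ⟨x, h⟩) else none) = _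
          rw [dif_pos hx]
end

section
/- Let M₁, M₂ be types with subsets N₁ ⊆ M₁, N₂ ⊆ M₂, and let A be a type with a weight function w : A → ℕ taking only positive values and a subset B ⊆ A. Then for every n, the set of pairs (K, φ), with K a finite subset of M₁ ⊕ M₂ and φ : K → A satisfying Σ_{x∈K} w(φ(x)) = n, is in bijection with the disjoint union over n₁ + n₂ = n of the products of: the set of pairs (K₁, φ₁) with K₁ a finite subset of M₁, φ₁ : K₁ → A, Σ w(φ₁) = n₁, and the set of pairs (K₂, φ₂) with K₂ a finite subset of M₂, φ₂ : K₂ → A, Σ w(φ₂) = n₂; the bijection is given by intersecting K with the two summands. Moreover, [some x ∈ K lies in inl '' N₁ ∪ inr '' N₂ or has φ(x) ∈ B] holds if and only if the corresponding condition holds for (K₁, φ₁) with respect to (N₁, B) or for (K₂, φ₂) with respect to (N₂, B). -/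
section Aux

variable {M₁ M₂ A : Type*} (w : A → ℕ)

/-- Extensionality for decorated configurations. -/
lemma sigmaConf_ext {M A : Type*} {K K' : Finset M} (φ : {x // x ∈ K} → A)
    (φ' : {x // x ∈ K'} → A) (hK : K = K')
    (hφ : ∀ x (h : x ∈ K) (h' : x ∈ K'), φ ⟨x, h⟩ = φ' ⟨x, h'⟩) :
    (⟨K, φ⟩ : Σ K : Finset M, ({x // x ∈ K} → A)) = ⟨K', φ'⟩ := by
  subst hK
  have : φ = φ' := by funext x; exact hφ x.1 x.2 x.2
  rw [this]

/-- The left part of a configuration on a sum type. -/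
def confL (p : Σ K : Finset (M₁ ⊕ M₂), ({x // x ∈ K} → A)) :
    Σ K : Finset M₁, ({x // x ∈ K} → A) :=
  ⟨p.1.toLeft, fun a => p.2 ⟨Sum.inl a.1, Finset.mem_toLeft.mp a.2⟩⟩

/-- The right part of a configuration on a sum type. -/
def confR (p : Σ K : Finset (M₁ ⊕ M₂), ({x // x ∈ K} → A)) :
    Σ K : Finset M₂, ({x // x ∈ K} → A) :=
  ⟨p.1.toRight, fun b => p.2 ⟨Sum.inr b.1, Finset.mem_toRight.mp b.2⟩⟩

/-- Splitting a finite subset of a sum type. -/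
def sumSplitEquiv (K : Finset (M₁ ⊕ M₂)) :
    {x // x ∈ K} ≃ {a // a ∈ K.toLeft} ⊕ {b // b ∈ K.toRight} where
  toFun x := match x with
    | ⟨Sum.inl a, h⟩ => Sum.inl ⟨a, Finset.mem_toLeft.mpr h⟩
    | ⟨Sum.inr b, h⟩ => Sum.inr ⟨b, Finset.mem_toRight.mpr h⟩
  invFun y := match y with
    | Sum.inl a => ⟨Sum.inl a.1, Finset.mem_toLeft.mp a.2⟩
    | Sum.inr b => ⟨Sum.inr b.1, Finset.mem_toRight.mp b.2⟩
  left_inv := by rintro ⟨x | x, h⟩ <;> rfl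
  right_inv := by rintro (⟨a, h⟩ | ⟨b, h⟩) <;> rfl

lemma weight_split (p : Σ K : Finset (M₁ ⊕ M₂), ({x // x ∈ K} → A)) :
    configWeight w p = configWeight w (confL p) + configWeight w (confR p) := by
  rw [show configWeight w p = ∑ y : {a // a ∈ p.1.toLeft} ⊕ {b // b ∈ p.1.toRight},
      Sum.elim (fun a => w ((confL p).2 a)) (fun b => w ((confR p).2 b)) y from
    Fintype.sum_equiv (sumSplitEquiv p.1) _ _ (by rintro ⟨a | b, h⟩ <;> rfl)]
  refine (Fintype.sum_sum_type _).trans ?_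
  rfl

/-- Combining two configurations into one on the sum type. -/
def mkConf (q₁ : Σ K : Finset M₁, ({x // x ∈ K} → A))
    (q₂ : Σ K : Finset M₂, ({x // x ∈ K} → A)) :
    Σ K : Finset (M₁ ⊕ M₂), ({x // x ∈ K} → A) :=
  ⟨q₁.1.disjSum q₂.1, fun x => match x with
    | ⟨Sum.inl a, h⟩ => q₁.2 ⟨a, by simpa using h⟩
    | ⟨Sum.inr b, h⟩ => q₂.2 ⟨b, by simpa using h⟩⟩

lemma confL_mkConf (q₁ : Σ K : Finset M₁, ({x // x ∈ K} → A))
    (q₂ : Σ K : Finset M₂, ({x // x ∈ K} → A)) : confL (mkConf q₁ q₂) = q₁ := by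
  obtain ⟨K₁, φ₁⟩ := q₁
  exact sigmaConf_ext _ _ Finset.toLeft_disjSum (fun x h h' => rfl)

lemma confR_mkConf (q₁ : Σ K : Finset M₁, ({x // x ∈ K} → A))
    (q₂ : Σ K : Finset M₂, ({x // x ∈ K} → A)) : confR (mkConf q₁ q₂) = q₂ := by
  obtain ⟨K₂, φ₂⟩ := q₂
  exact sigmaConf_ext _ _ Finset.toRight_disjSum (fun x h h' => rfl)

lemma target_ext {n : ℕ}
    (x y : Σ q : {q : ℕ × ℕ // q.1 + q.2 = n}, Config M₁ A w q.1.1 × Config M₂ A w q.1.2)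
    (h₁ : x.2.1.1 = y.2.1.1) (h₂ : x.2.2.1 = y.2.2.1) : x = y := by
  obtain ⟨⟨⟨a, b⟩, hab⟩, ⟨s, hs⟩, ⟨t, ht⟩⟩ := x
  obtain ⟨⟨⟨a', b'⟩, hab'⟩, ⟨s', hs'⟩, ⟨t', ht'⟩⟩ := y
  dsimp at h₁ h₂ hs ht hs' ht'
  subst h₁ h₂
  obtain rfl : a = a' := hs.symm.trans hs'
  obtain rfl : b = b' := ht.symm.trans ht'
  rfl

lemma mkConf_conf (p : Σ K : Finset (M₁ ⊕ M₂), ({x // x ∈ K} → A)) :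
    mkConf (confL p) (confR p) = p := by
  obtain ⟨K, φ⟩ := p
  exact sigmaConf_ext _ _ (Finset.toLeft_disjSum_toRight) (by rintro (a | b) h h' <;> rfl)

end Aux

/-- the degree-`n` decorated configurations on `M₁ ⊕ M₂` with labels in
`(A, w)` are in bijection with the disjoint union over `n₁ + n₂ = n` of the products of
the degree-`n₁` decorated configurations on `M₁` and the degree-`n₂` decorated
configurations on `M₂`, via intersecting `K` with the two summands; and the bijection
matches up the distinguished configurations (w.r.t. `inl '' N₁ ∪ inr '' N₂` and `B` on
the left, and `(N₁, B)`, `(N₂, B)` on the right). -/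
theorem config_add_exponents {M₁ M₂ A : Type*} (N₁ : Set M₁) (N₂ : Set M₂)
    (w : A → ℕ) (hw : ∀ a, 0 < w a) (B : Set A) (n : ℕ) :
    ∃ g : Config (M₁ ⊕ M₂) A w n →
        Σ q : {q : ℕ × ℕ // q.1 + q.2 = n}, Config M₁ A w q.1.1 × Config M₂ A w q.1.2,
      Function.Bijective g ∧
      (∀ p, (∀ a : M₁, a ∈ ((g p).2.1.1.1 : Finset M₁) ↔ Sum.inl a ∈ p.1.1) ∧
            (∀ b : M₂, b ∈ ((g p).2.2.1.1 : Finset M₂) ↔ Sum.inr b ∈ p.1.1) ∧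
            (∀ (a : M₁) (h : Sum.inl a ∈ p.1.1) (h' : a ∈ ((g p).2.1.1.1 : Finset M₁)),
              (g p).2.1.1.2 ⟨a, h'⟩ = p.1.2 ⟨Sum.inl a, h⟩) ∧
            (∀ (b : M₂) (h : Sum.inr b ∈ p.1.1) (h' : b ∈ ((g p).2.2.1.1 : Finset M₂)),
              (g p).2.2.1.2 ⟨b, h'⟩ = p.1.2 ⟨Sum.inr b, h⟩)) ∧
      (∀ p, IsDistinguished (Sum.inl '' N₁ ∪ Sum.inr '' N₂) B p.1 ↔
          IsDistinguished N₁ B (g p).2.1.1 ∨ IsDistinguished N₂ B (g p).2.2.1) := by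
  refine ⟨fun p => ⟨⟨(configWeight w (confL p.1), configWeight w (confR p.1)),
      by rw [← weight_split]; exact p.2⟩, ⟨confL p.1, rfl⟩, ⟨confR p.1, rfl⟩⟩,
    ⟨?_, ?_⟩, ?_, ?_⟩
  · -- injective
    intro p p' h
    have h₁ : confL p.1 = confL p'.1 :=
      congrArg (fun x : Σ q : {q : ℕ × ℕ // q.1 + q.2 = n},
        Config M₁ A w q.1.1 × Config M₂ A w q.1.2 => x.2.1.1) h
    have h₂ : confR p.1 = confR p'.1 :=
      congrArg (fun x : Σ q : {q : ℕ × ℕ // q.1 + q.2 = n},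
        Config M₁ A w q.1.1 × Config M₂ A w q.1.2 => x.2.2.1) h
    apply Subtype.ext
    rw [← mkConf_conf p.1, ← mkConf_conf p'.1, h₁, h₂]
  · -- surjective
    rintro ⟨⟨⟨n₁, n₂⟩, hn⟩, ⟨q₁, h₁⟩, ⟨q₂, h₂⟩⟩
    refine ⟨⟨mkConf q₁ q₂, by
      rw [weight_split, confL_mkConf, confR_mkConf, h₁, h₂]; exact hn⟩, ?_⟩
    exact target_ext w _ _ (confL_mkConf q₁ q₂) (confR_mkConf q₁ q₂)
  · intro p
    refine ⟨fun a => Finset.mem_toLeft, fun b => Finset.mem_toRight, fun a h h' => rfl,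
      fun b h h' => rfl⟩
  · intro p
    constructor
    · rintro ⟨⟨x, hx⟩, hd⟩
      match x, hx, hd with
      | Sum.inl a, hx, hd =>
        refine Or.inl ⟨⟨a, Finset.mem_toLeft.mpr hx⟩, ?_⟩
        rcases hd with (⟨a', ha', e⟩ | ⟨b', hb', e⟩) | hB
        · exact Or.inl (by cases e; exact ha')
        · cases e
        · exact Or.inr hB
      | Sum.inr b, hx, hd =>
        refine Or.inr ⟨⟨b, Finset.mem_toRight.mpr hx⟩, ?_⟩
        rcases hd with (⟨a', ha', e⟩ | ⟨b', hb', e⟩) | hB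
        · cases e
        · exact Or.inl (by cases e; exact hb')
        · exact Or.inr hB
    · rintro (⟨⟨a, ha⟩, hd⟩ | ⟨⟨b, hb⟩, hd⟩)
      · exact ⟨⟨Sum.inl a, Finset.mem_toLeft.mp ha⟩,
          hd.imp (fun h => Or.inl ⟨a, h, rfl⟩) id⟩
      · exact ⟨⟨Sum.inr b, Finset.mem_toRight.mp hb⟩,
          hd.imp (fun h => Or.inr ⟨b, h, rfl⟩) id⟩
end

section
/- Let M₁, M₂ be types with subsets N₁ ⊆ M₁, N₂ ⊆ M₂, and let A be a type with a weight function w : A → ℕ taking only positive values and a subset B ⊆ A. Let D be the set of pairs (K₂, ψ) with K₂ a nonempty finite subset of M₂ and ψ : K₂ → A, with weight W(K₂, ψ) = Σ_{z∈K₂} w(ψ(z)), and call (K₂, ψ) distinguished if some z ∈ K₂ lies in N₂ or has ψ(z) ∈ B. Then for every n, the set of pairs (K, φ), with K a finite subset of M₁ × M₂ and φ : K → A satisfying Σ_{(x,y)∈K} w(φ(x,y)) = n, is in bijection with the set of pairs (K₁, Φ), with K₁ a finite subset of M₁ and Φ : K₁ → D satisfying Σ_{x∈K₁} W(Φ(x))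 = n; the bijection sends (K, φ) to K₁ = π₁(K) together with Φ(x) = (π₂(K ∩ ({x} × M₂)), the restriction of φ to that fiber). Moreover, [some (x,y) ∈ K satisfies x ∈ N₁, or y ∈ N₂, or φ(x,y) ∈ B] holds if and only if [some x ∈ K₁ lies in N₁ or Φ(x) is distinguished]. -/
open Finset

section Aux

variable {M₁ M₂ M A : Type*} [DecidableEq M₁] [DecidableEq M₂] (w : A → ℕ)

abbrev DLab (M₂ A : Type*) := {d : Σ K₂ : Finset M₂, ({y // y ∈ K₂} → A) // d.1.Nonempty}

open Classical in
/-- proof-free weight function -/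
noncomputable def Fw (s : Σ K : Finset M, ({x // x ∈ K} → A)) : M → ℕ :=
  fun z => if h : z ∈ s.1 then w (s.2 ⟨z, h⟩) else 0

lemma configWeight_eq_sum (s : Σ K : Finset M, ({x // x ∈ K} → A)) :
    configWeight w s = ∑ z ∈ s.1, Fw w s z := by
  rw [← Finset.sum_coe_sort s.1 (Fw w s)]
  refine Finset.sum_congr rfl fun z _ => ?_
  rw [Fw, dif_pos z.2]

def fiber (K : Finset (M₁ × M₂)) (x : M₁) : Finset M₂ :=
  (K.filter (fun z => z.1 = x)).image Prod.snd

lemma mem_fiber {K : Finset (M₁ × M₂)} {x : M₁} {y : M₂} :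
    y ∈ fiber K x ↔ (x, y) ∈ K := by
  simp only [fiber, mem_image, mem_filter, Prod.exists]
  constructor
  · rintro ⟨a, b, ⟨hm, rfl⟩, rfl⟩; exact hm
  · intro h; exact ⟨x, y, ⟨h, rfl⟩, rfl⟩

def fwd (s : Σ K : Finset (M₁ × M₂), ({z // z ∈ K} → A)) :
    Σ K₁ : Finset M₁, ({x // x ∈ K₁} → DLab M₂ A) :=
  ⟨s.1.image Prod.fst, fun x =>
    ⟨⟨fiber s.1 x.1, fun y => s.2 ⟨(x.1, y.1), mem_fiber.1 y.2⟩⟩, by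
      obtain ⟨x, hx⟩ := x
      simp only [mem_image, Prod.exists] at hx
      obtain ⟨a, b, hab, rfl⟩ := hx
      exact ⟨b, mem_fiber.2 hab⟩⟩⟩

lemma mem_fwd1 {s : Σ K : Finset (M₁ × M₂), ({z // z ∈ K} → A)} {x : M₁} :
    x ∈ (fwd s).1 ↔ ∃ y, (x, y) ∈ s.1 := by
  simp only [fwd, mem_image, Prod.exists]
  constructor
  · rintro ⟨a, b, hab, rfl⟩; exact ⟨b, hab⟩
  · rintro ⟨y, hy⟩; exact ⟨x, y, hy, rfl⟩

def bwdK (t : Σ K₁ : Finset M₁, ({x // x ∈ K₁} → DLab M₂ A)) : Finset (M₁ × M₂) :=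
  t.1.attach.biUnion fun x => ((t.2 x).1.1).image fun y => (x.1, y)

lemma mem_bwdK {t : Σ K₁ : Finset M₁, ({x // x ∈ K₁} → DLab M₂ A)} {x : M₁} {y : M₂} :
    (x, y) ∈ bwdK t ↔ ∃ hx : x ∈ t.1, y ∈ ((t.2 ⟨x, hx⟩).1.1) := by
  simp only [bwdK, mem_biUnion, mem_attach, true_and, mem_image, Subtype.exists,
    Prod.mk.injEq]
  constructor
  · rintro ⟨a, ha, b, hb, rfl, rfl⟩; exact ⟨ha, hb⟩
  · rintro ⟨hx, hy⟩; exact ⟨x, hx, y, hy, rfl, rfl⟩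

def bwd (t : Σ K₁ : Finset M₁, ({x // x ∈ K₁} → DLab M₂ A)) :
    Σ K : Finset (M₁ × M₂), ({z // z ∈ K} → A) :=
  ⟨bwdK t, fun z =>
    (t.2 ⟨z.1.1, (mem_bwdK.1 z.2).choose⟩).1.2 ⟨z.1.2, (mem_bwdK.1 z.2).choose_spec⟩⟩

lemma sigma_ext {M A : Type*} {p q : Σ K : Finset M, ({x // x ∈ K} → A)}
    (h1 : p.1 = q.1)
    (h2 : ∀ z (hp : z ∈ p.1) (hq : z ∈ q.1), p.2 ⟨z, hp⟩ = q.2 ⟨z, hq⟩) : p = q := by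
  obtain ⟨K, φ⟩ := p; obtain ⟨K', φ'⟩ := q
  cases h1
  simp only [Sigma.mk.inj_iff, heq_eq_eq, true_and]
  funext z
  exact h2 z.1 z.2 z.2

lemma bwd_fwd (s : Σ K : Finset (M₁ × M₂), ({z // z ∈ K} → A)) : bwd (fwd s) = s := by
  apply sigma_ext
  · ext ⟨x, y⟩
    show (x, y) ∈ bwdK (fwd s) ↔ _
    rw [mem_bwdK]
    constructor
    · rintro ⟨hx, hy⟩
      exact mem_fiber.1 hy
    · intro h
      exact ⟨mem_fwd1.2 ⟨y, h⟩, mem_fiber.2 h⟩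
  · intro z hp hq
    rfl

lemma fwd_bwd (t : Σ K₁ : Finset M₁, ({x // x ∈ K₁} → DLab M₂ A)) : fwd (bwd t) = t := by
  apply sigma_ext
  · ext x
    rw [mem_fwd1]
    constructor
    · rintro ⟨y, hy⟩
      exact (mem_bwdK.1 hy).choose
    · intro hx
      obtain ⟨y, hy⟩ := (t.2 ⟨x, hx⟩).2
      exact ⟨y, mem_bwdK.2 ⟨hx, hy⟩⟩
  · intro x hp hq
    apply Subtype.ext
    apply sigma_ext
    · ext y
      show y ∈ fiber (bwdK t) x ↔ _
      rw [mem_fiber, mem_bwdK]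
      constructor
      · rintro ⟨hx, hy⟩; exact hy
      · intro hy; exact ⟨hq, hy⟩
    · intro y hyp hyq
      rfl

lemma inner_weight (s : Σ K : Finset (M₁ × M₂), ({z // z ∈ K} → A)) (x : M₁) :
    configWeight w ⟨fiber s.1 x, fun y => s.2 ⟨(x, y.1), mem_fiber.1 y.2⟩⟩
      = ∑ z ∈ s.1.filter (fun z => z.1 = x), Fw w s z := by
  have inj : ∀ z₁ ∈ s.1.filter (fun z => z.1 = x), ∀ z₂ ∈ s.1.filter (fun z => z.1 = x),
      z₁.2 = z₂.2 → z₁ = z₂ := by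
    rintro ⟨a, b⟩ ha ⟨c, d⟩ hc h
    have ha' : a = x := (Finset.mem_filter.1 ha).2
    have hc' : c = x := (Finset.mem_filter.1 hc).2
    simp only [Prod.mk.injEq]
    exact ⟨ha'.trans hc'.symm, h⟩
  rw [configWeight_eq_sum]
  have step1 : ∀ y ∈ fiber s.1 x,
      Fw w ⟨fiber s.1 x, fun y => s.2 ⟨(x, y.1), mem_fiber.1 y.2⟩⟩ y = Fw w s (x, y) := by
    intro y hy
    simp only [Fw]
    rw [dif_pos hy, dif_pos (mem_fiber.1 hy)]
  rw [Finset.sum_congr rfl step1]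
  show ∑ y ∈ (s.1.filter (fun z => z.1 = x)).image Prod.snd, Fw w s (x, y) = _
  rw [Finset.sum_image inj]
  refine Finset.sum_congr rfl fun z hz => ?_
  obtain ⟨a, b⟩ := z
  obtain rfl : a = x := (Finset.mem_filter.1 hz).2
  rfl

lemma fwd_weight (s : Σ K : Finset (M₁ × M₂), ({z // z ∈ K} → A)) :
    configWeight (fun d : DLab M₂ A => configWeight w d.1) (fwd s) = configWeight w s := by
  rw [configWeight_eq_sum, configWeight_eq_sum,
    ← Finset.sum_fiberwise_of_maps_to (fun z hz => Finset.mem_image_of_mem Prod.fst hz)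
      (Fw w s)]
  refine Finset.sum_congr rfl fun x hx => ?_
  rw [Fw, dif_pos (show x ∈ (fwd s).1 from hx)]
  exact inner_weight w s x

end Aux

/-- let `D` be the set of nonempty decorated configurations `(K₂, ψ)` on
`M₂` with labels in `(A, w)`, weighted by total weight. Then the degree-`n` decorated
configurations on `M₁ × M₂` with labels in `(A, w)` are in bijection with the degree-`n`
decorated configurations on `M₁` with labels in `D`, via `K₁ = π₁(K)` and
`Φ(x) = (fiber of K over x, restriction of φ)`; and a configuration has a point
`(x, y) ∈ K` with `x ∈ N₁`, or `y ∈ N₂`, or label in `B`, iff its image has a point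
`x ∈ K₁` lying in `N₁` or carrying a distinguished label. -/
theorem config_mul_exponents {M₁ M₂ A : Type*} (N₁ : Set M₁) (N₂ : Set M₂)
    (w : A → ℕ) (hw : ∀ a, 0 < w a) (B : Set A) (n : ℕ) :
    ∃ g : Config (M₁ × M₂) A w n →
        Config M₁ {d : Σ K₂ : Finset M₂, ({y // y ∈ K₂} → A) // d.1.Nonempty}
          (fun d => configWeight w d.1) n,
      Function.Bijective g ∧
      (∀ p, (∀ x : M₁, x ∈ ((g p).1.1 : Finset M₁) ↔ ∃ y : M₂, (x, y) ∈ p.1.1) ∧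
        (∀ (x : M₁) (hx : x ∈ ((g p).1.1 : Finset M₁)) (y : M₂),
          y ∈ (((g p).1.2 ⟨x, hx⟩ : _).1.1 : Finset M₂) ↔ (x, y) ∈ p.1.1) ∧
        (∀ (x : M₁) (hx : x ∈ ((g p).1.1 : Finset M₁)) (y : M₂)
            (hy : (x, y) ∈ p.1.1) (hy' : y ∈ (((g p).1.2 ⟨x, hx⟩ : _).1.1 : Finset M₂)),
          ((g p).1.2 ⟨x, hx⟩ : _).1.2 ⟨y, hy'⟩ = p.1.2 ⟨(x, y), hy⟩)) ∧
      (∀ p,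
        (∃ z : {z // z ∈ p.1.1}, (z : M₁ × M₂).1 ∈ N₁ ∨ (z : M₁ × M₂).2 ∈ N₂ ∨
            p.1.2 z ∈ B) ↔
          ∃ x : {x // x ∈ (g p).1.1}, (x : M₁) ∈ N₁ ∨
            IsDistinguished N₂ B ((g p).1.2 x : _).1) := by
  classical
  refine ⟨fun p => ⟨fwd p.1, by rw [fwd_weight]; exact p.2⟩, ?_, ?_, ?_⟩
  · refine Function.bijective_iff_has_inverse.2
      ⟨fun q => ⟨bwd q.1, ?_⟩, fun p => Subtype.ext (bwd_fwd p.1), fun q => Subtype.ext (fwd_bwd q.1)⟩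
    have h := fwd_weight w (bwd q.1)
    rw [fwd_bwd] at h
    rw [← h]; exact q.2
  · intro p
    refine ⟨fun x => mem_fwd1, fun x hx y => mem_fiber, fun x hx y hy hy' => rfl⟩
  · intro p
    constructor
    · rintro ⟨⟨⟨x, y⟩, hz⟩, h⟩
      refine ⟨⟨x, mem_fwd1.2 ⟨y, hz⟩⟩, ?_⟩
      rcases h with h | h | h
      · exact Or.inl h
      · exact Or.inr ⟨⟨y, mem_fiber.2 hz⟩, Or.inl h⟩
      · exact Or.inr ⟨⟨y, mem_fiber.2 hz⟩, Or.inr h⟩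
    · rintro ⟨⟨x, hx⟩, h | hd⟩
      · obtain ⟨y, hy⟩ := mem_fwd1.1 hx
        exact ⟨⟨(x, y), hy⟩, Or.inl h⟩
      · obtain ⟨⟨y, hy⟩, h⟩ := hd
        refine ⟨⟨(x, y), mem_fiber.1 hy⟩, ?_⟩
        rcases h with h | h
        · exact Or.inr (Or.inl h)
        · exact Or.inr (Or.inr h)
end
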